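/- Let 1 < α < 2 be real and, for each integer n ≥ 0, define f₁(n) = [ 2 ( (n + 1)(n + α/2 + 1)/(n + 2) − (n + α/2) )² · (n + 2)/(n + α/2) ] / [ (1/2)(n + 1)(n + α/2 + 1) + 2(n + α/2)(n + 2) ]. Then sup_{n ≥ 0} f₁(n) = f₁(0) = 2(2 − α)² / (α(2 + 9α)); in particular f₁(n) ≤ 2(2 − α)² / (α(2 + 9α)) for all integers n ≥ 0. -/
import Mathlib


/-- The quantity `f₁(n)` from the paper. -/
noncomputable def f₁ (α : ℝ) (n : ℕ) : ℝ :=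
  (2 * (((n : ℝ) + 1) * ((n : ℝ) + α / 2 + 1) / ((n : ℝ) + 2) - ((n : ℝ) + α / 2)) ^ 2 *
      (((n : ℝ) + 2) / ((n : ℝ) + α / 2))) /
    ((1 / 2) * ((n : ℝ) + 1) * ((n : ℝ) + α / 2 + 1) + 2 * ((n : ℝ) + α / 2) * ((n : ℝ) + 2))

lemma f₁_eq (α : ℝ) (hα1 : 1 < α) (n : ℕ) :
    f₁ α n = (2 - α) ^ 2 /
      (2 * ((n : ℝ) + 2) * ((n : ℝ) + α / 2) *
        ((1 / 2) * ((n : ℝ) + 1) * ((n : ℝ) + α / 2 + 1) + 2 * ((n : ℝ) + α / 2) * ((n : ℝ) + 2))) := by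
  have hn : (0 : ℝ) ≤ (n : ℝ) := Nat.cast_nonneg n
  have h1 : (n : ℝ) + 2 ≠ 0 := by positivity
  have h2 : (n : ℝ) + α / 2 ≠ 0 := by nlinarith
  have h3 : (1 / 2) * ((n : ℝ) + 1) * ((n : ℝ) + α / 2 + 1) + 2 * ((n : ℝ) + α / 2) * ((n : ℝ) + 2) ≠ 0 := by
    nlinarith
  unfold f₁
  field_simp
  ring

theorem sup_f₁ (α : ℝ) (hα1 : 1 < α) (hα2 : α < 2) :
    f₁ α 0 = 2 * (2 - α) ^ 2 / (α * (2 + 9 * α)) ∧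
    IsGreatest (Set.range (f₁ α)) (2 * (2 - α) ^ 2 / (α * (2 + 9 * α))) ∧
    ∀ n : ℕ, f₁ α n ≤ 2 * (2 - α) ^ 2 / (α * (2 + 9 * α)) := by
  have h0 : f₁ α 0 = 2 * (2 - α) ^ 2 / (α * (2 + 9 * α)) := by
    rw [f₁_eq α hα1 0]
    push_cast
    rw [div_eq_div_iff (by nlinarith) (by nlinarith)]
    ring
  have hle : ∀ n : ℕ, f₁ α n ≤ 2 * (2 - α) ^ 2 / (α * (2 + 9 * α)) := by
    intro n
    rw [← h0, f₁_eq α hα1 n, f₁_eq α hα1 0]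
    have hn : (0 : ℝ) ≤ (n : ℝ) := Nat.cast_nonneg n
    apply div_le_div_of_nonneg_left (by positivity)
    · push_cast; nlinarith [mul_nonneg hn hn, mul_nonneg (mul_nonneg hn hn) hn, mul_nonneg (mul_nonneg (mul_nonneg hn hn) hn) hn, mul_nonneg hn (le_of_lt (lt_trans one_pos hα1)), mul_nonneg (mul_nonneg hn hn) (le_of_lt (lt_trans one_pos hα1))]
    · push_cast; nlinarith [mul_nonneg hn hn, mul_nonneg (mul_nonneg hn hn) hn, mul_nonneg (mul_nonneg (mul_nonneg hn hn) hn) hn, mul_nonneg hn (le_of_lt (lt_trans one_pos hα1)), mul_nonneg (mul_nonneg hn hn) (le_of_lt (lt_trans one_pos hα1))]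
  exact ⟨h0, ⟨⟨0, h0⟩, fun x ⟨n, hn⟩ => hn ▸ hle n⟩, hle⟩
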